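/- arXiv:1612.02060 — 2 statements merged into one kernel-verified Lean document; each statement's English description precedes it below -/
import Mathlib

section
/- Let ν(x), ν(y) ∈ ℂ² be row vectors, N an invertible 2×2 matrix with NC symmetric for a 2×2 matrix C, and let w ∈ ℂ² be another row vector (representing ∇ₓν(y)). Then det with rows [ν(y)N ; wN - ν(y)NCν(x)ᵀ ν(x)N] equals det[ν(y); w]·det N + (ν(x)NCν(y)ᵀ)·det[ν(x); ν(y)]·det N. -/
open Matrix

/-- For row vectors ν(x), ν(y), w ∈ ℂ² and 2×2 matrices N, C with
N invertible and NC symmetric,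
det[ν(y)N ; wN - ν(y)NCν(x)ᵀν(x)N]
  = det[ν(y); w]·det N + (ν(x)NCν(y)ᵀ)·det[ν(x); ν(y)]·det N. -/
theorem stmt8 (N C : Matrix (Fin 2) (Fin 2) ℂ)
    (hN : IsUnit N.det) (hNC : (N * C)ᵀ = N * C)
    (νx νy w : Fin 2 → ℂ) :
    (Matrix.of ![νy ᵥ* N, w ᵥ* N - νy ᵥ* (N * C * Matrix.vecMulVec νx νx * N)]).det =
      (Matrix.of ![νy, w]).det * N.det +
        ((νx ᵥ* (N * C)) ⬝ᵥ νy) * (Matrix.of ![νx, νy]).det * N.det := by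
  have h01 : (N * C) 1 0 = (N * C) 0 1 := congrFun (congrFun hNC 0) 1
  have h : (νy ᵥ* (N * C)) ⬝ᵥ νx = (νx ᵥ* (N * C)) ⬝ᵥ νy := by
    simp only [vecMul, dotProduct, Fin.sum_univ_two]
    linear_combination (νx 0 * νy 1 - νy 0 * νx 1) * h01
  have key : νy ᵥ* (N * C * Matrix.vecMulVec νx νx * N)
      = ((νx ᵥ* (N * C)) ⬝ᵥ νy) • (νx ᵥ* N) := by
    rw [← h]
    funext j
    simp only [vecMul, dotProduct, mul_apply, vecMulVec_apply, Fin.sum_univ_two,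
      Pi.smul_apply, smul_eq_mul]
    fin_cases j <;> ring
  rw [key]
  simp only [det_fin_two, of_apply, cons_val', cons_val_zero, cons_val_one, head_cons,
    head_fin_const, empty_val', cons_val_fin_one, Pi.sub_apply, Pi.smul_apply, smul_eq_mul,
    vecMul, dotProduct, Fin.sum_univ_two]
  ring
end

section
/- For n ≥ 1, the number of partial injective maps (partial permutations) from subsets of {1,…,n} to {1,…,n}, counted with weight α^M β^K where M is the number of chains, i.e. the maximal orbits that are not cycles, and K is the number of cycles in the functional graph, equals p^n(α,β) = (-1)^n n! Σ_{i=0}^{n} ((-α)^i / i!) · C(-β - i, n - i), where C denotes the generalized binomial coefficient. -/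
open scoped Classical

/-- `k`-fold iteration of a partial map `f : Fin n → Option (Fin n)`. -/
def optIter {n : ℕ} (f : Fin n → Option (Fin n)) : ℕ → Fin n → Option (Fin n)
  | 0, i => some i
  | (k + 1), i => (f i).bind (optIter f k)

/-- `i` lies on a cycle of the functional graph of `f`. -/
def IsCyclicPt {n : ℕ} (f : Fin n → Option (Fin n)) (i : Fin n) : Prop :=
  ∃ k ∈ Finset.Icc 1 n, optIter f k i = some i

/-- The number of chains (maximal non-cyclic components, including isolated
vertices) of the functional graph of `f`: each such chain contains exactly one
vertex with `f i = none`. -/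
noncomputable def numChains {n : ℕ} (f : Fin n → Option (Fin n)) : ℕ :=
  (Finset.univ.filter (fun i : Fin n => f i = none)).card

/-- The number of cycles of the functional graph of `f`: each cycle is counted
via its minimal vertex. -/
noncomputable def numCycles {n : ℕ} (f : Fin n → Option (Fin n)) : ℕ :=
  (Finset.univ.filter (fun i : Fin n => IsCyclicPt f i ∧
    ∀ k ∈ Finset.Icc 1 n, ∀ j : Fin n, optIter f k i = some j → i ≤ j)).card

namespace Stmt11

variable {n : ℕ}

theorem optIter_add (f : Fin n → Option (Fin n)) (a b : ℕ) (i : Fin n) :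
    optIter f (a + b) i = (optIter f a i).bind (optIter f b) := by
  induction a generalizing i with
  | zero => simp [optIter]
  | succ a ih =>
    have : a + 1 + b = a + b + 1 := by omega
    rw [this]
    show (f i).bind (optIter f (a + b)) = ((f i).bind (optIter f a)).bind (optIter f b)
    cases f i with
    | none => rfl
    | some x => simp only [Option.bind_some, ih]

/-- unbounded reachability -/
def Reach (f : Fin n → Option (Fin n)) (i j : Fin n) : Prop :=
  ∃ k, 1 ≤ k ∧ optIter f k i = some j

def Cyc (f : Fin n → Option (Fin n)) (i : Fin n) : Prop := Reach f i i

theorem optIter_some_of_add (f : Fin n → Option (Fin n)) {a b : ℕ} {i j : Fin n}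
    (h : optIter f (a + b) i = some j) : ∃ x, optIter f a i = some x ∧ optIter f b x = some j := by
  rw [optIter_add] at h
  cases hx : optIter f a i with
  | none => rw [hx] at h; simp at h
  | some x => rw [hx] at h; exact ⟨x, rfl, h⟩

/-- a cyclic point has a period in `[1, n]`. -/
theorem cyc_short {f : Fin n → Option (Fin n)} {i : Fin n} (h : Cyc f i) :
    ∃ k ∈ Finset.Icc 1 n, optIter f k i = some i := by
  obtain ⟨k, hk1, hk⟩ := h
  -- take the minimal period
  have hex : ∃ m, 1 ≤ m ∧ optIter f m i = some i := ⟨k, hk1, hk⟩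
  classical
  let m := Nat.find hex
  obtain ⟨hm1, hm⟩ := Nat.find_spec hex
  have hmin : ∀ t, t < m → ¬ (1 ≤ t ∧ optIter f t i = some i) := fun t ht => Nat.find_min hex ht
  -- injectivity of t ↦ optIter f t i on range m
  haveI : Inhabited (Fin n) := ⟨i⟩
  have key : ∀ t1 t2, t1 < m → t2 < m → t1 < t2 →
      (optIter f t1 i).iget = (optIter f t2 i).iget → False := by
    intro t1 t2 h1 h2 hlt heq
    -- optIter f t1 i and optIter f t2 i are both some
    obtain ⟨x1, hx1, hrest1⟩ := optIter_some_of_add f (a := t1) (b := m - t1) (by rwa [Nat.add_sub_cancel' h1.le])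
    obtain ⟨x2, hx2, hrest2⟩ := optIter_some_of_add f (a := t2) (b := m - t2) (by rwa [Nat.add_sub_cancel' h2.le])
    have hx12 : x1 = x2 := by
      have := heq
      simp only [hx1, hx2, Option.iget_some] at this
      exact this
    -- then return in t1 + (m - t2) < m steps
    have hret : optIter f (t1 + (m - t2)) i = some i := by
      rw [optIter_add, hx1, Option.bind_some, hx12]
      exact hrest2
    exact hmin _ (by omega) ⟨by omega, hret⟩
  have hinj : Set.InjOn (fun t => (optIter f t i).iget) (Finset.range m) := by
    intro t1 h1 t2 h2 heq
    simp only [Finset.coe_range, Set.mem_Iio] at h1 h2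
    rcases Nat.lt_trichotomy t1 t2 with hlt | he | hlt
    · exact absurd (key t1 t2 h1 h2 hlt heq) not_false
    · exact he
    · exact absurd (key t2 t1 h2 h1 hlt heq.symm) not_false
  have hcard : m ≤ n := by
    have := Finset.card_le_card_of_injOn (fun t => (optIter f t i).iget)
      (fun t _ => Finset.mem_univ _) hinj
    simpa using this
  exact ⟨m, Finset.mem_Icc.2 ⟨hm1, hcard⟩, hm⟩

/-- reachability from a cyclic point can be realized within `[1, n]` steps. -/
theorem reach_short {f : Fin n → Option (Fin n)} {i j : Fin n} (hc : Cyc f i)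
    (h : Reach f i j) : ∃ k ∈ Finset.Icc 1 n, optIter f k i = some j := by
  obtain ⟨m, hm, hmper⟩ := cyc_short hc
  rw [Finset.mem_Icc] at hm
  obtain ⟨k, hk1, hk⟩ := h
  induction k using Nat.strong_induction_on with
  | _ k ih =>
    by_cases hkn : k ≤ n
    · exact ⟨k, Finset.mem_Icc.2 ⟨hk1, hkn⟩, hk⟩
    · have hdec : optIter f (k - m) i = some j := by
        have : optIter f (m + (k - m)) i = some j := by
          rwa [Nat.add_sub_cancel' (by omega)]
        rw [optIter_add, hmper, Option.bind_some] at this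
        exact this
      exact ih (k - m) (by omega) (by omega) hdec

theorem minCyc_iff {f : Fin n → Option (Fin n)} {i : Fin n} :
    (IsCyclicPt f i ∧ ∀ k ∈ Finset.Icc 1 n, ∀ j : Fin n, optIter f k i = some j → i ≤ j)
      ↔ (Cyc f i ∧ ∀ j, Reach f i j → i ≤ j) := by
  constructor
  · rintro ⟨⟨k, hk, hki⟩, hmin⟩
    have hcyc : Cyc f i := ⟨k, (Finset.mem_Icc.1 hk).1, hki⟩
    refine ⟨hcyc, fun j hj => ?_⟩
    obtain ⟨k', hk', hk'j⟩ := reach_short hcyc hj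
    exact hmin k' hk' j hk'j
  · rintro ⟨hcyc, hmin⟩
    refine ⟨cyc_short hcyc, fun k hk j hkj => hmin j ⟨k, (Finset.mem_Icc.1 hk).1, hkj⟩⟩

def MinP (f : Fin n → Option (Fin n)) (i : Fin n) : Prop :=
  Cyc f i ∧ ∀ j, Reach f i j → i ≤ j

theorem numCycles_eq (f : Fin n → Option (Fin n)) :
    numCycles f = (Finset.univ.filter (MinP f)).card := by
  unfold numCycles
  congr 1
  ext i
  simp only [Finset.mem_filter, Finset.mem_univ, true_and]
  exact minCyc_iff


def lift : Option (Fin n) → Option (Fin (n+1)) := Option.map Fin.castSucc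

def projOpt : Option (Fin (n+1)) → Option (Fin n) :=
  fun o => o.bind (fun j => if h : j = Fin.last n then none else some (j.castPred h))

theorem csl (q : Fin n) : q.castSucc ≠ Fin.last n := (Fin.castSucc_lt_last q).ne

@[simp] theorem lift_none : lift (none : Option (Fin n)) = none := rfl
@[simp] theorem lift_some (q : Fin n) : lift (some q) = some q.castSucc := rfl

theorem lift_ne_some_last (o : Option (Fin n)) : lift o ≠ some (Fin.last n) := by
  cases o with
  | none => simp
  | some q => simp [csl q]

theorem projOpt_lift (o : Option (Fin n)) : projOpt (lift o) = o := by
  cases o with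
  | none => rfl
  | some q => simp [projOpt, csl q]

theorem lift_projOpt {o : Option (Fin (n+1))} (h : o ≠ some (Fin.last n)) :
    lift (projOpt o) = o := by
  cases o with
  | none => rfl
  | some y =>
    rcases Fin.eq_castSucc_or_eq_last y with ⟨s, rfl⟩ | rfl
    · simp [projOpt, csl s]
    · exact absurd rfl h

theorem projOpt_eq_some {o : Option (Fin (n+1))} {b : Fin n} :
    projOpt o = some b ↔ o = some b.castSucc := by
  constructor
  · intro h
    cases o with
    | none => simp [projOpt] at h
    | some y =>
      by_cases hy : y = Fin.last n
      · subst hy; simp [projOpt] at h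
      · simp only [projOpt, Option.bind_some, dif_neg hy, Option.some_inj] at h
        subst h; simp
  · rintro rfl; simp [projOpt, csl b]


/-- extension data: `inl none` = isolated, `inl (some p)` = insert after `p`,
`inr none` = new fixed point, `inr (some s)` = new head before `s`. -/
abbrev E (n : ℕ) := Option (Fin n) ⊕ Option (Fin n)

def extFun (f' : Fin n → Option (Fin n)) : E n → Fin (n+1) → Option (Fin (n+1))
  | Sum.inl none => fun x => if h : x = Fin.last n then none else lift (f' (x.castPred h))
  | Sum.inl (some p) => fun x => if h : x = Fin.last n then lift (f' p)
      else if x.castPred h = p then some (Fin.last n) else lift (f' (x.castPred h))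
  | Sum.inr none => fun x =>
      if h : x = Fin.last n then some (Fin.last n) else lift (f' (x.castPred h))
  | Sum.inr (some s) => fun x =>
      if h : x = Fin.last n then some s.castSucc else lift (f' (x.castPred h))

def valid (f' : Fin n → Option (Fin n)) : E n → Prop
  | Sum.inr (some s) => ∀ q, f' q ≠ some s
  | _ => True

@[simp] theorem extFun_cs_isolated (f' : Fin n → Option (Fin n)) (q : Fin n) :
    extFun f' (Sum.inl none) q.castSucc = lift (f' q) := by
  simp [extFun, dif_neg (csl q)]

@[simp] theorem extFun_cs_fix (f' : Fin n → Option (Fin n)) (q : Fin n) :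
    extFun f' (Sum.inr none) q.castSucc = lift (f' q) := by
  simp [extFun, dif_neg (csl q)]

@[simp] theorem extFun_cs_head (f' : Fin n → Option (Fin n)) (s q : Fin n) :
    extFun f' (Sum.inr (some s)) q.castSucc = lift (f' q) := by
  simp [extFun, dif_neg (csl q)]

theorem extFun_cs_ins (f' : Fin n → Option (Fin n)) (p q : Fin n) :
    extFun f' (Sum.inl (some p)) q.castSucc =
      if q = p then some (Fin.last n) else lift (f' q) := by
  simp [extFun, dif_neg (csl q)]
  by_cases h : q = p <;> simp [h]

@[simp] theorem extFun_last_isolated (f' : Fin n → Option (Fin n)) :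
    extFun f' (Sum.inl none) (Fin.last n) = none := by simp [extFun]

@[simp] theorem extFun_last_fix (f' : Fin n → Option (Fin n)) :
    extFun f' (Sum.inr none) (Fin.last n) = some (Fin.last n) := by simp [extFun]

@[simp] theorem extFun_last_head (f' : Fin n → Option (Fin n)) (s : Fin n) :
    extFun f' (Sum.inr (some s)) (Fin.last n) = some s.castSucc := by simp [extFun]

@[simp] theorem extFun_last_ins (f' : Fin n → Option (Fin n)) (p : Fin n) :
    extFun f' (Sum.inl (some p)) (Fin.last n) = lift (f' p) := by simp [extFun]

noncomputable def dataOf (f : Fin (n+1) → Option (Fin (n+1))) : E n :=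
  if h : ∃ p : Fin n, f p.castSucc = some (Fin.last n) then Sum.inl (some h.choose)
  else if f (Fin.last n) = none then Sum.inl none
  else if h2 : ∃ s : Fin n, f (Fin.last n) = some s.castSucc then Sum.inr (some h2.choose)
  else Sum.inr none

noncomputable def resFun (f : Fin (n+1) → Option (Fin (n+1))) (q : Fin n) : Option (Fin n) :=
  if f q.castSucc = some (Fin.last n) then projOpt (f (Fin.last n)) else projOpt (f q.castSucc)

/-! ### orbit transfer lemmas -/

theorem lift_eq_some_cs {o : Option (Fin n)} {j : Fin n} :
    lift o = some j.castSucc ↔ o = some j := by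
  cases o with
  | none => simp
  | some q => simp [Fin.castSucc_inj]

theorem optIter_lift {F : Fin (n+1) → Option (Fin (n+1))} {f' : Fin n → Option (Fin n)}
    (hsame : ∀ q : Fin n, F q.castSucc = lift (f' q)) :
    ∀ k (q : Fin n), optIter F k q.castSucc = lift (optIter f' k q) := by
  intro k
  induction k with
  | zero => intro q; rfl
  | succ k ih =>
    intro q
    show (F q.castSucc).bind _ = lift ((f' q).bind _)
    rw [hsame]
    cases hq : f' q with
    | none => rfl
    | some r => simpa using ih r

section Insert

variable {f' : Fin n → Option (Fin n)} {p : Fin n}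

private def Fp (f' : Fin n → Option (Fin n)) (p : Fin n) := extFun f' (Sum.inl (some p))

theorem Fp_cs (q : Fin n) :
    Fp f' p q.castSucc = if q = p then some (Fin.last n) else lift (f' q) :=
  extFun_cs_ins f' p q

theorem Fp_last : Fp f' p (Fin.last n) = lift (f' p) := extFun_last_ins f' p

theorem ins_iter_fwd1 (hp : f' p = none) :
    ∀ k (q j : Fin n), optIter f' k q = some j →
      optIter (Fp f' p) k q.castSucc = some j.castSucc := by
  intro k
  induction k with
  | zero =>
    intro q j h
    simp only [optIter, Option.some_inj] at h ⊢
    rw [h]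
  | succ k ih =>
    intro q j h
    rw [show k + 1 = 1 + k by omega, optIter_add] at h ⊢
    cases hq : f' q with
    | none => simp [optIter, hq] at h
    | some r =>
      simp only [optIter, hq, Option.bind_some, Option.bind_fun_some] at h
      have hqp : q ≠ p := fun hh => by rw [hh, hp] at hq; simp at hq
      simp only [optIter, Fp_cs, if_neg hqp, hq, lift_some, Option.bind_some, Option.bind_fun_some]
      exact ih r j h

theorem ins_iter_bwd1 (hp : f' p = none) :
    ∀ k (q j : Fin n), optIter (Fp f' p) k q.castSucc = some j.castSucc →
      optIter f' k q = some j := by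
  intro k
  induction k with
  | zero =>
    intro q j h
    simp only [optIter, Option.some_inj] at h ⊢
    exact Fin.castSucc_injective n h
  | succ k ih =>
    intro q j h
    show (f' q).bind _ = _
    have hstep : optIter (Fp f' p) (k+1) q.castSucc = (Fp f' p q.castSucc).bind (optIter (Fp f' p) k) := rfl
    rw [hstep] at h
    by_cases hqp : q = p
    · rw [Fp_cs, if_pos hqp, Option.bind_some] at h
      -- iterating from last: first step is none
      cases k with
      | zero => exact absurd (Option.some_inj.1 h).symm (csl j)
      | succ k' =>
        have : optIter (Fp f' p) (k'+1) (Fin.last n) =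
            (Fp f' p (Fin.last n)).bind (optIter (Fp f' p) k') := rfl
        rw [this, Fp_last, hp] at h
        exact absurd h (by simp)
    · rw [Fp_cs, if_neg hqp] at h
      cases hq : f' q with
      | none => rw [hq] at h; exact absurd h (by simp [lift])
      | some r =>
        rw [hq, lift_some, Option.bind_some] at h
        simp only [Option.bind_some]
        exact ih r j h

theorem ins_iter_fwd2 {s : Fin n} (hp : f' p = some s) :
    ∀ k (q j : Fin n), optIter f' k q = some j →
      ∃ m, k ≤ m ∧ optIter (Fp f' p) m q.castSucc = some j.castSucc := by
  intro k
  induction k with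
  | zero =>
    intro q j h
    refine ⟨0, le_refl _, ?_⟩
    simp only [optIter, Option.some_inj] at h ⊢
    rw [h]
  | succ k ih =>
    intro q j h
    have hstep : optIter f' (k+1) q = (f' q).bind (optIter f' k) := rfl
    rw [hstep] at h
    cases hq : f' q with
    | none => rw [hq] at h; exact absurd h (by simp)
    | some r =>
      rw [hq, Option.bind_some] at h
      obtain ⟨m, hm, hit⟩ := ih r j h
      by_cases hqp : q = p
      · have hr : r = s := by rw [hqp, hp] at hq; exact (Option.some_inj.1 hq).symm
        refine ⟨m + 2, by omega, ?_⟩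
        have e1 : optIter (Fp f' p) (m+2) q.castSucc =
            (Fp f' p q.castSucc).bind (optIter (Fp f' p) (m+1)) := rfl
        have e2 : optIter (Fp f' p) (m+1) (Fin.last n) =
            (Fp f' p (Fin.last n)).bind (optIter (Fp f' p) m) := rfl
        rw [e1, Fp_cs, if_pos hqp, Option.bind_some, e2, Fp_last, hp, lift_some,
          Option.bind_some]
        rw [hr] at hit
        exact hit
      · refine ⟨m + 1, by omega, ?_⟩
        have e1 : optIter (Fp f' p) (m+1) q.castSucc =
            (Fp f' p q.castSucc).bind (optIter (Fp f' p) m) := rfl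
        rw [e1, Fp_cs, if_neg hqp, hq, lift_some, Option.bind_some]
        exact hit

theorem ins_iter_bwd2 {s : Fin n} (hp : f' p = some s) :
    ∀ m (q j : Fin n), optIter (Fp f' p) m q.castSucc = some j.castSucc →
      ∃ k, k ≤ m ∧ (1 ≤ m → 1 ≤ k) ∧ optIter f' k q = some j := by
  intro m
  induction m using Nat.strong_induction_on with
  | _ m IH =>
    intro q j h
    match m with
    | 0 =>
      refine ⟨0, le_refl _, by omega, ?_⟩
      simp only [optIter, Option.some_inj] at h ⊢
      exact Fin.castSucc_injective n h
    | m' + 1 =>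
      have hstep : optIter (Fp f' p) (m'+1) q.castSucc =
          (Fp f' p q.castSucc).bind (optIter (Fp f' p) m') := rfl
      rw [hstep] at h
      by_cases hqp : q = p
      · rw [Fp_cs, if_pos hqp, Option.bind_some] at h
        match m' with
        | 0 => exact absurd (Option.some_inj.1 h).symm (csl j)
        | m'' + 1 =>
          have e2 : optIter (Fp f' p) (m''+1) (Fin.last n) =
              (Fp f' p (Fin.last n)).bind (optIter (Fp f' p) m'') := rfl
          rw [e2, Fp_last, hp, lift_some, Option.bind_some] at h
          obtain ⟨k'', hk1, _, hk3⟩ := IH m'' (by omega) s j h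
          refine ⟨k'' + 1, by omega, by omega, ?_⟩
          have e3 : optIter f' (k''+1) q = (f' q).bind (optIter f' k'') := rfl
          rw [e3, hqp, hp, Option.bind_some]
          exact hk3
      · rw [Fp_cs, if_neg hqp] at h
        cases hq : f' q with
        | none => rw [hq] at h; exact absurd h (by simp [lift])
        | some r =>
          rw [hq, lift_some, Option.bind_some] at h
          obtain ⟨k', hk1, _, hk3⟩ := IH m' (by omega) r j h
          refine ⟨k' + 1, by omega, by omega, ?_⟩
          have : optIter f' (k'+1) q = (f' q).bind (optIter f' k') := rfl
          rw [this, hq, Option.bind_some]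
          exact hk3

theorem reach_cs_iff_ins (q j : Fin n) :
    Reach (Fp f' p) q.castSucc j.castSucc ↔ Reach f' q j := by
  cases hp : f' p with
  | none =>
    constructor
    · rintro ⟨k, hk1, hk⟩; exact ⟨k, hk1, ins_iter_bwd1 hp k q j hk⟩
    · rintro ⟨k, hk1, hk⟩; exact ⟨k, hk1, ins_iter_fwd1 hp k q j hk⟩
  | some s =>
    constructor
    · rintro ⟨m, hm1, hm⟩
      obtain ⟨k, _, hk2, hk3⟩ := ins_iter_bwd2 hp m q j hm
      exact ⟨k, hk2 hm1, hk3⟩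
    · rintro ⟨k, hk1, hk⟩
      obtain ⟨m, hm1, hm⟩ := ins_iter_fwd2 hp k q j hk
      exact ⟨m, by omega, hm⟩

end Insert

theorem reach_cs_iff_lift {F : Fin (n+1) → Option (Fin (n+1))} {f' : Fin n → Option (Fin n)}
    (hsame : ∀ q : Fin n, F q.castSucc = lift (f' q)) (q j : Fin n) :
    Reach F q.castSucc j.castSucc ↔ Reach f' q j := by
  constructor
  · rintro ⟨k, hk1, hk⟩
    rw [optIter_lift hsame] at hk
    exact ⟨k, hk1, lift_eq_some_cs.1 hk⟩
  · rintro ⟨k, hk1, hk⟩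
    exact ⟨k, hk1, by rw [optIter_lift hsame, hk]; rfl⟩

/-- transfer of the "minimal cyclic point" predicate along castSucc. -/
theorem minP_cs_iff {F : Fin (n+1) → Option (Fin (n+1))} {f' : Fin n → Option (Fin n)}
    (hR : ∀ q j : Fin n, Reach F q.castSucc j.castSucc ↔ Reach f' q j) (q : Fin n) :
    (Cyc F q.castSucc ∧ ∀ j, Reach F q.castSucc j → q.castSucc ≤ j) ↔
      (Cyc f' q ∧ ∀ j, Reach f' q j → q ≤ j) := by
  constructor
  · rintro ⟨hc, hmin⟩
    refine ⟨(hR q q).1 hc, fun j hj => ?_⟩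
    have := hmin j.castSucc ((hR q j).2 hj)
    exact Fin.castSucc_le_castSucc_iff.1 this
  · rintro ⟨hc, hmin⟩
    refine ⟨(hR q q).2 hc, fun j' hj' => ?_⟩
    rcases Fin.eq_castSucc_or_eq_last j' with ⟨j, rfl⟩ | rfl
    · exact Fin.castSucc_le_castSucc_iff.2 (hmin j ((hR q j).1 hj'))
    · exact Fin.le_last _

theorem not_cyc_last_of_none {F : Fin (n+1) → Option (Fin (n+1))}
    (h : F (Fin.last n) = none) : ¬ Cyc F (Fin.last n) := by
  rintro ⟨k, hk1, hk⟩
  match k, hk1 with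
  | k' + 1, _ =>
    have : optIter F (k'+1) (Fin.last n) = (F (Fin.last n)).bind (optIter F k') := rfl
    rw [this, h] at hk
    exact absurd hk (by simp)

theorem not_min_last_of_cs {F : Fin (n+1) → Option (Fin (n+1))} {s : Fin n}
    (h : F (Fin.last n) = some s.castSucc) :
    ¬ (Cyc F (Fin.last n) ∧ ∀ j, Reach F (Fin.last n) j → Fin.last n ≤ j) := by
  rintro ⟨_, hmin⟩
  have hr : Reach F (Fin.last n) s.castSucc := ⟨1, le_refl _, by
    have : optIter F 1 (Fin.last n) = (F (Fin.last n)).bind (optIter F 0) := rfl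
    rw [this, h]; rfl⟩
  exact (not_le.2 (Fin.castSucc_lt_last s)) (hmin _ hr)

theorem min_last_of_fix {F : Fin (n+1) → Option (Fin (n+1))}
    (h : F (Fin.last n) = some (Fin.last n)) :
    Cyc F (Fin.last n) ∧ ∀ j, Reach F (Fin.last n) j → Fin.last n ≤ j := by
  have hiter : ∀ k, optIter F k (Fin.last n) = some (Fin.last n) := by
    intro k
    induction k with
    | zero => rfl
    | succ k ih =>
      have : optIter F (k+1) (Fin.last n) = (F (Fin.last n)).bind (optIter F k) := rfl
      rw [this, h, Option.bind_some, ih]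
  constructor
  · exact ⟨1, le_refl _, hiter 1⟩
  · rintro j ⟨k, _, hk⟩
    rw [hiter k] at hk
    exact le_of_eq (Option.some_inj.1 hk)

/-! ### counting lemmas -/

theorem lift_eq_none {o : Option (Fin n)} : lift o = none ↔ o = none := by
  cases o <;> simp [lift]

theorem card_filter_succ (P : Fin (n+1) → Prop) [DecidablePred P]
    [DecidablePred (fun q : Fin n => P q.castSucc)] :
    (Finset.univ.filter P).card
      = (Finset.univ.filter (fun q : Fin n => P q.castSucc)).card
        + (if P (Fin.last n) then 1 else 0) := by
  rw [Fin.univ_castSuccEmb, Finset.filter_cons, apply_ite Finset.card, Finset.card_cons,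
    Finset.filter_map, Finset.card_map]
  have he : (Finset.univ.filter (P ∘ Fin.castSuccEmb)).card
      = (Finset.univ.filter (fun q : Fin n => P q.castSucc)).card := by
    congr 1
    ext q
    simp only [Finset.mem_filter, Finset.mem_univ, true_and, Function.comp_apply]
    exact Iff.rfl
  rw [he]
  split_ifs <;> omega

theorem reach_ext_iff (f' : Fin n → Option (Fin n)) (e : E n) (q j : Fin n) :
    Reach (extFun f' e) q.castSucc j.castSucc ↔ Reach f' q j := by
  match e with
  | Sum.inl none => exact reach_cs_iff_lift (extFun_cs_isolated f') q j
  | Sum.inr none => exact reach_cs_iff_lift (extFun_cs_fix f') q j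
  | Sum.inr (some s) => exact reach_cs_iff_lift (extFun_cs_head f' s) q j
  | Sum.inl (some p) => exact reach_cs_iff_ins q j

theorem minP_last_iff (f' : Fin n → Option (Fin n)) (e : E n) :
    MinP (extFun f' e) (Fin.last n) ↔ e = Sum.inr none := by
  constructor
  · intro h
    match e with
    | Sum.inr none => rfl
    | Sum.inl none => exact absurd h.1 (not_cyc_last_of_none (extFun_last_isolated f'))
    | Sum.inr (some s) => exact absurd h (not_min_last_of_cs (extFun_last_head f' s))
    | Sum.inl (some p) =>
      cases hp : f' p with
      | none =>
        refine absurd h.1 (not_cyc_last_of_none ?_)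
        rw [extFun_last_ins, hp]; rfl
      | some s =>
        refine absurd h (not_min_last_of_cs (s := s) ?_)
        rw [extFun_last_ins, hp]; rfl
  · rintro rfl
    exact min_last_of_fix (extFun_last_fix f')

theorem numCycles_ext (f' : Fin n → Option (Fin n)) (e : E n) :
    numCycles (extFun f' e) = numCycles f' + (if e = Sum.inr none then 1 else 0) := by
  rw [numCycles_eq, numCycles_eq, card_filter_succ (MinP (extFun f' e))]
  congr 1
  · congr 1
    ext q
    simp only [Finset.mem_filter, Finset.mem_univ, true_and]
    exact minP_cs_iff (reach_ext_iff f' e) q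
  · by_cases he : e = Sum.inr none
    · rw [if_pos ((minP_last_iff f' e).2 he), if_pos he]
    · rw [if_neg (fun hh => he ((minP_last_iff f' e).1 hh)), if_neg he]

theorem numChains_ext (f' : Fin n → Option (Fin n)) (e : E n) :
    numChains (extFun f' e) = numChains f' + (if e = Sum.inl none then 1 else 0) := by
  unfold numChains
  rw [card_filter_succ (fun x => extFun f' e x = none)]
  match e with
  | Sum.inl none =>
    simp only [extFun_cs_isolated, extFun_last_isolated, lift_eq_none, if_pos rfl,
      reduceCtorEq, if_true]
  | Sum.inr none =>
    simp only [extFun_cs_fix, extFun_last_fix, lift_eq_none, reduceCtorEq, if_false]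
  | Sum.inr (some s) =>
    simp only [extFun_cs_head, extFun_last_head, lift_eq_none, reduceCtorEq, if_false]
  | Sum.inl (some p) =>
    have hcs : ∀ q : Fin n, (extFun f' (Sum.inl (some p)) q.castSucc = none)
        ↔ (¬ q = p ∧ f' q = none) := by
      intro q
      rw [extFun_cs_ins]
      by_cases hq : q = p
      · simp [hq]
      · simp [hq, lift_eq_none]
    cases hp : f' p with
    | none =>
      have hfilter : (Finset.univ.filter
          (fun q : Fin n => extFun f' (Sum.inl (some p)) q.castSucc = none))
          = (Finset.univ.filter (fun q : Fin n => f' q = none)).erase p := by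
        ext q
        simp only [Finset.mem_filter, Finset.mem_univ, true_and, Finset.mem_erase, hcs]
      have hpmem : p ∈ Finset.univ.filter (fun q : Fin n => f' q = none) := by
        simp [hp]
      have hlast : extFun f' (Sum.inl (some p)) (Fin.last n) = none := by
        rw [extFun_last_ins, hp]; rfl
      rw [hfilter, Finset.card_erase_of_mem hpmem, if_pos hlast]
      have : 1 ≤ (Finset.univ.filter (fun q : Fin n => f' q = none)).card :=
        Finset.card_pos.2 ⟨p, hpmem⟩
      have hne : ¬ (Sum.inl (some p) : E n) = Sum.inl none :=
        fun hh => by simp at hh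
      rw [if_neg hne]
      omega
    | some s =>
      have hfilter : (Finset.univ.filter
          (fun q : Fin n => extFun f' (Sum.inl (some p)) q.castSucc = none))
          = Finset.univ.filter (fun q : Fin n => f' q = none) := by
        ext q
        simp only [Finset.mem_filter, Finset.mem_univ, true_and, hcs]
        constructor
        · tauto
        · intro hq
          refine ⟨fun hqp => ?_, hq⟩
          rw [hqp, hp] at hq
          simp at hq
      have hlast : ¬ extFun f' (Sum.inl (some p)) (Fin.last n) = none := by
        rw [extFun_last_ins, hp]
        simp [lift]
      have hne : ¬ (Sum.inl (some p) : E n) = Sum.inl none :=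
        fun hh => by simp at hh
      rw [hfilter, if_neg hlast, if_neg hne]

theorem card_heads (f' : Fin n → Option (Fin n))
    (hinj : ∀ i j a, f' i = some a → f' j = some a → i = j) :
    (Finset.univ.filter (fun s : Fin n => ∀ q, f' q ≠ some s)).card = numChains f' := by
  cases n with
  | zero => simp [numChains]
  | succ m =>
    haveI : Inhabited (Fin (m+1)) := ⟨0⟩
    set g : Fin (m+1) → Fin (m+1) := fun q => (f' q).iget with hg
    have himg : (Finset.univ.filter (fun s : Fin (m+1) => ∃ q, f' q = some s))
        = (Finset.univ.filter (fun q : Fin (m+1) => f' q ≠ none)).image g := by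
      ext s
      simp only [Finset.mem_filter, Finset.mem_univ, true_and, Finset.mem_image]
      constructor
      · rintro ⟨q, hq⟩
        refine ⟨q, ?_, ?_⟩
        · simp [hq]
        · simp [hg, hq]
      · rintro ⟨q, hne, hiq⟩
        cases hfq : f' q with
        | none => exact absurd hfq hne
        | some y =>
          refine ⟨q, ?_⟩
          rw [hfq]
          rw [← hiq, hg]
          simp [hfq]
    have hcardimg : ((Finset.univ.filter (fun q : Fin (m+1) => f' q ≠ none)).image g).card
        = (Finset.univ.filter (fun q : Fin (m+1) => f' q ≠ none)).card := by
      apply Finset.card_image_of_injOn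
      intro q1 h1 q2 h2 he
      have h1' : f' q1 ≠ none := by simpa using (Finset.mem_filter.1 h1).2
      have h2' : f' q2 ≠ none := by simpa using (Finset.mem_filter.1 h2).2
      cases hf1 : f' q1 with
      | none => exact absurd hf1 h1'
      | some y1 =>
        cases hf2 : f' q2 with
        | none => exact absurd hf2 h2'
        | some y2 =>
          have : y1 = y2 := by
            rw [hg] at he
            simp only [hf1, hf2, Option.iget_some] at he
            exact he
          exact hinj q1 q2 y1 hf1 (by rw [hf2, this])
    have h1 := Finset.card_filter_add_card_filter_not
      (s := (Finset.univ : Finset (Fin (m+1))))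
      (p := fun s => ∃ q, f' q = some s)
    have h2 := Finset.card_filter_add_card_filter_not
      (s := (Finset.univ : Finset (Fin (m+1))))
      (p := fun q : Fin (m+1) => f' q = none)
    have hpred1 : (Finset.univ.filter (fun s : Fin (m+1) => ¬ ∃ q, f' q = some s))
        = Finset.univ.filter (fun s : Fin (m+1) => ∀ q, f' q ≠ some s) := by
      ext s; simp
    have hpred2 : (Finset.univ.filter (fun q : Fin (m+1) => ¬ f' q = none))
        = Finset.univ.filter (fun q : Fin (m+1) => f' q ≠ none) := by
      rfl
    rw [hpred1] at h1
    rw [hpred2] at h2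
    rw [himg, hcardimg] at h1
    unfold numChains
    simp only [Finset.card_univ, Fintype.card_fin] at h1 h2
    omega

/-! ### the bijection -/

def InjP {m : ℕ} (f : Fin m → Option (Fin m)) : Prop :=
  ∀ i j a, f i = some a → f j = some a → i = j

theorem ext_inj {f' : Fin n → Option (Fin n)} {e : E n} (hinj : InjP f') (hv : valid f' e) :
    InjP (extFun f' e) := by
  have hlift : ∀ (q1 q2 : Fin n) (a : Fin (n+1)),
      lift (f' q1) = some a → lift (f' q2) = some a → q1 = q2 := by
    intro q1 q2 a h1 h2
    rcases Fin.eq_castSucc_or_eq_last a with ⟨b, rfl⟩ | rfl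
    · exact hinj q1 q2 b (lift_eq_some_cs.1 h1) (lift_eq_some_cs.1 h2)
    · exact absurd h1 (lift_ne_some_last _)
  intro x y a hx hy
  match e with
  | Sum.inl none =>
    rcases Fin.eq_castSucc_or_eq_last x with ⟨q1, rfl⟩ | rfl
    · rcases Fin.eq_castSucc_or_eq_last y with ⟨q2, rfl⟩ | rfl
      · rw [extFun_cs_isolated] at hx hy
        rw [hlift q1 q2 a hx hy]
      · rw [extFun_last_isolated] at hy; simp at hy
    · rw [extFun_last_isolated] at hx; simp at hx
  | Sum.inr none =>
    rcases Fin.eq_castSucc_or_eq_last x with ⟨q1, rfl⟩ | rfl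
    · rcases Fin.eq_castSucc_or_eq_last y with ⟨q2, rfl⟩ | rfl
      · rw [extFun_cs_fix] at hx hy
        rw [hlift q1 q2 a hx hy]
      · rw [extFun_last_fix] at hy
        rw [extFun_cs_fix] at hx
        cases hy
        exact absurd hx (lift_ne_some_last _)
    · rcases Fin.eq_castSucc_or_eq_last y with ⟨q2, rfl⟩ | rfl
      · rw [extFun_last_fix] at hx
        rw [extFun_cs_fix] at hy
        cases hx
        exact absurd hy (lift_ne_some_last _)
      · rfl
  | Sum.inr (some s) =>
    rcases Fin.eq_castSucc_or_eq_last x with ⟨q1, rfl⟩ | rfl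
    · rcases Fin.eq_castSucc_or_eq_last y with ⟨q2, rfl⟩ | rfl
      · rw [extFun_cs_head] at hx hy
        rw [hlift q1 q2 a hx hy]
      · rw [extFun_last_head] at hy
        rw [extFun_cs_head] at hx
        cases hy
        exact absurd (hv q1) (by simp [lift_eq_some_cs.1 hx])
    · rcases Fin.eq_castSucc_or_eq_last y with ⟨q2, rfl⟩ | rfl
      · rw [extFun_last_head] at hx
        rw [extFun_cs_head] at hy
        cases hx
        exact absurd (hv q2) (by simp [lift_eq_some_cs.1 hy])
      · rfl
  | Sum.inl (some p) =>
    rcases Fin.eq_castSucc_or_eq_last x with ⟨q1, rfl⟩ | rfl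
    · rcases Fin.eq_castSucc_or_eq_last y with ⟨q2, rfl⟩ | rfl
      · rw [extFun_cs_ins] at hx hy
        by_cases h1 : q1 = p <;> by_cases h2 : q2 = p
        · rw [h1, h2]
        · rw [if_pos h1] at hx
          rw [if_neg h2] at hy
          cases hx
          exact absurd hy (lift_ne_some_last _)
        · rw [if_neg h1] at hx
          rw [if_pos h2] at hy
          cases hy
          exact absurd hx (lift_ne_some_last _)
        · rw [if_neg h1] at hx
          rw [if_neg h2] at hy
          rw [hlift q1 q2 a hx hy]
      · rw [extFun_last_ins] at hy
        rw [extFun_cs_ins] at hx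
        by_cases h1 : q1 = p
        · rw [if_pos h1] at hx
          cases hx
          exact absurd hy (lift_ne_some_last _)
        · rw [if_neg h1] at hx
          exact absurd (hlift q1 p a hx hy) h1
    · rcases Fin.eq_castSucc_or_eq_last y with ⟨q2, rfl⟩ | rfl
      · rw [extFun_last_ins] at hx
        rw [extFun_cs_ins] at hy
        by_cases h2 : q2 = p
        · rw [if_pos h2] at hy
          cases hy
          exact absurd hx (lift_ne_some_last _)
        · rw [if_neg h2] at hy
          exact absurd (hlift q2 p a hy hx) h2
      · rfl

theorem resFun_eq_some {f : Fin (n+1) → Option (Fin (n+1))} {q b : Fin n} :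
    resFun f q = some b ↔
      ((f q.castSucc = some (Fin.last n) ∧ f (Fin.last n) = some b.castSucc) ∨
       (f q.castSucc ≠ some (Fin.last n) ∧ f q.castSucc = some b.castSucc)) := by
  unfold resFun
  by_cases h : f q.castSucc = some (Fin.last n)
  · rw [if_pos h, projOpt_eq_some]
    constructor
    · intro hh; exact Or.inl ⟨h, hh⟩
    · rintro (⟨_, hh⟩ | ⟨hne, _⟩)
      · exact hh
      · exact absurd h hne
  · rw [if_neg h, projOpt_eq_some]
    constructor
    · intro hh; exact Or.inr ⟨h, hh⟩
    · rintro (⟨hh, _⟩ | ⟨_, hh⟩)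
      · exact absurd hh h
      · exact hh

theorem res_inj {f : Fin (n+1) → Option (Fin (n+1))} (hinj : InjP f) : InjP (resFun f) := by
  intro q1 q2 b h1 h2
  rw [resFun_eq_some] at h1 h2
  rcases h1 with ⟨ha1, hb1⟩ | ⟨_, hb1⟩ <;> rcases h2 with ⟨ha2, hb2⟩ | ⟨_, hb2⟩
  · exact Fin.castSucc_injective n (hinj _ _ _ ha1 ha2)
  · exact absurd (hinj _ _ _ hb2 hb1) (csl q2)
  · exact absurd (hinj _ _ _ hb1 hb2) (csl q1)
  · exact Fin.castSucc_injective n (hinj _ _ _ hb1 hb2)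

theorem dataOf_valid {f : Fin (n+1) → Option (Fin (n+1))} (hinj : InjP f) :
    valid (resFun f) (dataOf f) := by
  unfold dataOf
  split_ifs with h h0 h2
  · trivial
  · trivial
  · -- newHead case
    intro q hq
    rw [resFun_eq_some] at hq
    have hs := h2.choose_spec
    rcases hq with ⟨ha, _⟩ | ⟨_, hb⟩
    · exact h ⟨q, ha⟩
    · exact csl q (hinj q.castSucc (Fin.last n) _ hb hs)
  · trivial

theorem ext_res_dataOf {f : Fin (n+1) → Option (Fin (n+1))} (hinj : InjP f) :
    extFun (resFun f) (dataOf f) = f := by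
  unfold dataOf
  split_ifs with h h0 h2
  · -- insert case
    obtain hp := h.choose_spec
    set p := h.choose with hpdef
    have hlast_ne : f (Fin.last n) ≠ some (Fin.last n) := by
      intro hh
      exact csl p (hinj _ _ _ hp hh)
    funext x
    rcases Fin.eq_castSucc_or_eq_last x with ⟨q, rfl⟩ | rfl
    · rw [extFun_cs_ins]
      by_cases hqp : q = p
      · rw [if_pos hqp, hqp, hp]
      · rw [if_neg hqp]
        have hne : f q.castSucc ≠ some (Fin.last n) := by
          intro hh
          exact hqp (Fin.castSucc_injective n (hinj _ _ _ hh hp))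
        unfold resFun
        rw [if_neg hne, lift_projOpt hne]
    · rw [extFun_last_ins]
      unfold resFun
      rw [if_pos hp, lift_projOpt hlast_ne]
  · -- isolated case
    funext x
    rcases Fin.eq_castSucc_or_eq_last x with ⟨q, rfl⟩ | rfl
    · rw [extFun_cs_isolated]
      have hne : f q.castSucc ≠ some (Fin.last n) := fun hh => h ⟨q, hh⟩
      unfold resFun
      rw [if_neg hne, lift_projOpt hne]
    · rw [extFun_last_isolated, h0]
  · -- newHead case
    funext x
    rcases Fin.eq_castSucc_or_eq_last x with ⟨q, rfl⟩ | rfl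
    · rw [extFun_cs_head]
      have hne : f q.castSucc ≠ some (Fin.last n) := fun hh => h ⟨q, hh⟩
      unfold resFun
      rw [if_neg hne, lift_projOpt hne]
    · rw [extFun_last_head]
      exact h2.choose_spec.symm
  · -- fixed point case
    have hfix : f (Fin.last n) = some (Fin.last n) := by
      cases hy : f (Fin.last n) with
      | none => exact absurd hy h0
      | some y =>
        rcases Fin.eq_castSucc_or_eq_last y with ⟨s, rfl⟩ | rfl
        · exact absurd ⟨s, hy⟩ h2
        · rfl
    funext x
    rcases Fin.eq_castSucc_or_eq_last x with ⟨q, rfl⟩ | rfl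
    · rw [extFun_cs_fix]
      have hne : f q.castSucc ≠ some (Fin.last n) := fun hh => h ⟨q, hh⟩
      unfold resFun
      rw [if_neg hne, lift_projOpt hne]
    · rw [extFun_last_fix, hfix]

theorem res_ext (f' : Fin n → Option (Fin n)) (e : E n) : resFun (extFun f' e) = f' := by
  funext q
  match e with
  | Sum.inl none =>
    unfold resFun
    rw [extFun_cs_isolated, if_neg (lift_ne_some_last _), projOpt_lift]
  | Sum.inr none =>
    unfold resFun
    rw [extFun_cs_fix, if_neg (lift_ne_some_last _), projOpt_lift]
  | Sum.inr (some s) =>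
    unfold resFun
    rw [extFun_cs_head, if_neg (lift_ne_some_last _), projOpt_lift]
  | Sum.inl (some p) =>
    unfold resFun
    rw [extFun_cs_ins]
    by_cases hqp : q = p
    · rw [if_pos hqp, if_pos rfl, extFun_last_ins, projOpt_lift, hqp]
    · rw [if_neg hqp, if_neg (lift_ne_some_last _), projOpt_lift]

theorem dataOf_ext (f' : Fin n → Option (Fin n)) (e : E n) : dataOf (extFun f' e) = e := by
  have hno : ∀ (ee : E n), (∀ q : Fin n, extFun f' ee q.castSucc = lift (f' q)) →
      ¬ ∃ q : Fin n, extFun f' ee q.castSucc = some (Fin.last n) := by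
    rintro ee hsame ⟨q, hq⟩
    rw [hsame q] at hq
    exact lift_ne_some_last _ hq
  unfold dataOf
  match e with
  | Sum.inl none =>
    rw [dif_neg (hno _ (extFun_cs_isolated f')), if_pos (extFun_last_isolated f')]
  | Sum.inr none =>
    rw [dif_neg (hno _ (extFun_cs_fix f'))]
    have h1 : ¬ extFun f' (Sum.inr none) (Fin.last n) = none := by
      rw [extFun_last_fix]; simp
    rw [if_neg h1]
    have h2 : ¬ ∃ s : Fin n, extFun f' (Sum.inr none) (Fin.last n) = some s.castSucc := by
      rintro ⟨s, hs⟩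
      rw [extFun_last_fix] at hs
      exact csl s (Option.some_inj.1 hs).symm
    rw [dif_neg h2]
  | Sum.inr (some s) =>
    rw [dif_neg (hno _ (extFun_cs_head f' s))]
    have h1 : ¬ extFun f' (Sum.inr (some s)) (Fin.last n) = none := by
      rw [extFun_last_head]; simp
    rw [if_neg h1]
    have h2 : ∃ t : Fin n, extFun f' (Sum.inr (some s)) (Fin.last n) = some t.castSucc :=
      ⟨s, by rw [extFun_last_head]⟩
    rw [dif_pos h2]
    have h3 : (some s.castSucc : Option (Fin (n+1))) = some h2.choose.castSucc :=
      (extFun_last_head f' s).symm.trans h2.choose_spec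
    have heq : h2.choose = s := Fin.castSucc_injective n (Option.some_inj.1 h3).symm
    exact congrArg (fun t => (Sum.inr (some t) : E n)) heq
  | Sum.inl (some p) =>
    have h : ∃ q : Fin n, extFun f' (Sum.inl (some p)) q.castSucc = some (Fin.last n) :=
      ⟨p, by rw [extFun_cs_ins, if_pos rfl]⟩
    rw [dif_pos h]
    have hc := h.choose_spec
    rw [extFun_cs_ins] at hc
    by_cases hcp : h.choose = p
    · rw [hcp]
    · rw [if_neg hcp] at hc
      exact absurd hc (lift_ne_some_last _)

/-! ### summation machinery -/

abbrev PI (m : ℕ) :=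
  {f : Fin m → Option (Fin m) // ∀ i j a, f i = some a → f j = some a → i = j}

theorem fiber_sum (f' : Fin n → Option (Fin n)) (hinj : InjP f') (g : ℕ → ℕ → ℚ) :
    ∑ e ∈ Finset.univ.filter (valid f'),
        g (numChains (extFun f' e)) (numCycles (extFun f' e))
      = g (numChains f' + 1) (numCycles f')
        + g (numChains f') (numCycles f' + 1)
        + (n : ℚ) * g (numChains f') (numCycles f')
        + (numChains f' : ℚ) * g (numChains f') (numCycles f') := by
  classical
  rw [Finset.sum_filter, Fintype.sum_sum_type, Fintype.sum_option, Fintype.sum_option]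
  have h1 : (if valid f' (Sum.inl none) then
      g (numChains (extFun f' (Sum.inl none))) (numCycles (extFun f' (Sum.inl none))) else 0)
      = g (numChains f' + 1) (numCycles f') := by
    rw [if_pos (show valid f' (Sum.inl none) from trivial), numChains_ext, numCycles_ext]
    simp
  have h2 : ∀ p : Fin n, (if valid f' (Sum.inl (some p)) then
      g (numChains (extFun f' (Sum.inl (some p)))) (numCycles (extFun f' (Sum.inl (some p)))) else 0)
      = g (numChains f') (numCycles f') := by
    intro p
    rw [if_pos (show valid f' (Sum.inl (some p)) from trivial), numChains_ext, numCycles_ext]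
    simp
  have h3 : (if valid f' (Sum.inr none) then
      g (numChains (extFun f' (Sum.inr none))) (numCycles (extFun f' (Sum.inr none))) else 0)
      = g (numChains f') (numCycles f' + 1) := by
    rw [if_pos (show valid f' (Sum.inr none) from trivial), numChains_ext, numCycles_ext]
    simp
  have h4 : ∀ s : Fin n, (if valid f' (Sum.inr (some s)) then
      g (numChains (extFun f' (Sum.inr (some s)))) (numCycles (extFun f' (Sum.inr (some s)))) else 0)
      = (if (∀ q, f' q ≠ some s) then g (numChains f') (numCycles f') else 0) := by
    intro s
    by_cases hv : ∀ q, f' q ≠ some s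
    · rw [if_pos (show valid f' (Sum.inr (some s)) from hv), if_pos hv,
        numChains_ext, numCycles_ext]
      simp
    · rw [if_neg (show ¬ valid f' (Sum.inr (some s)) from hv), if_neg hv]
  rw [h1, h3, Finset.sum_congr rfl (fun p _ => h2 p), Finset.sum_congr rfl (fun s _ => h4 s),
    Finset.sum_const, ← Finset.sum_filter, Finset.sum_const, card_heads f' hinj]
  simp only [Finset.card_univ, Fintype.card_fin, nsmul_eq_mul]
  ring

theorem sum_step (g : ℕ → ℕ → ℚ) :
    ∑ f : PI (n+1), g (numChains f.1) (numCycles f.1)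
      = ∑ f' : PI n,
          (g (numChains f'.1 + 1) (numCycles f'.1)
           + g (numChains f'.1) (numCycles f'.1 + 1)
           + (n : ℚ) * g (numChains f'.1) (numCycles f'.1)
           + (numChains f'.1 : ℚ) * g (numChains f'.1) (numCycles f'.1)) := by
  classical
  have main : ∑ f : PI (n+1), g (numChains f.1) (numCycles f.1)
      = ∑ x ∈ (Finset.univ : Finset (PI n)).sigma (fun f' => Finset.univ.filter (valid f'.1)),
          g (numChains (extFun x.1.1 x.2)) (numCycles (extFun x.1.1 x.2)) := by
    apply Finset.sum_nbij'
      (i := fun f : PI (n+1) => (⟨⟨resFun f.1, res_inj f.2⟩, dataOf f.1⟩ : Σ _ : PI n, E n))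
      (j := fun x : Σ _ : PI n, E n =>
        if h : valid x.1.1 x.2 then (⟨extFun x.1.1 x.2, ext_inj x.1.2 h⟩ : PI (n+1))
        else ⟨fun _ => none, fun i j a h1 _ => by simp at h1⟩)
    · intro f _
      exact Finset.mem_sigma.2 ⟨Finset.mem_univ _,
        Finset.mem_filter.2 ⟨Finset.mem_univ _, dataOf_valid f.2⟩⟩
    · intro x _
      exact Finset.mem_univ _
    · intro f _
      have hv := dataOf_valid f.2
      rw [dif_pos hv]
      exact Subtype.ext (ext_res_dataOf f.2)
    · intro x hx
      have hv : valid x.1.1 x.2 := (Finset.mem_filter.1 (Finset.mem_sigma.1 hx).2).2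
      rw [dif_pos hv]
      refine Sigma.ext ?_ ?_
      · exact Subtype.ext (res_ext x.1.1 x.2)
      · exact heq_of_eq (dataOf_ext x.1.1 x.2)
    · intro f _
      rw [ext_res_dataOf f.2]
  rw [main, Finset.sum_sigma]
  exact Finset.sum_congr rfl (fun f' _ => fiber_sum f'.1 f'.2 g)

noncomputable def T (m i : ℕ) (β : ℚ) : ℚ :=
  ∑ f : PI m, (if numChains f.1 = i then β ^ numCycles f.1 else 0)

theorem T_succ (i : ℕ) (β : ℚ) :
    T (n+1) i β = (if i = 0 then 0 else T n (i-1) β) + (β + n + i) * T n i β := by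
  unfold T
  rw [sum_step (fun M K => if M = i then β ^ K else 0)]
  have hpt : ∀ M K : ℕ, (if M + 1 = i then β ^ K else (0:ℚ))
      + (if M = i then β ^ (K+1) else 0)
      + (n:ℚ) * (if M = i then β ^ K else 0)
      + (M:ℚ) * (if M = i then β ^ K else 0)
      = (if i = 0 then 0 else if M = i - 1 then β ^ K else 0)
        + (β + n + i) * (if M = i then β ^ K else 0) := by
    intro M K
    by_cases hM : M = i
    · subst hM
      simp only [if_neg (show ¬ M + 1 = M from by omega), if_pos (rfl : M = M)]
      by_cases h : M = 0
      · simp only [if_pos h, pow_succ, ite_true, if_true]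
        ring
      · simp only [if_neg h, if_neg (show ¬ M = M - 1 from by omega), pow_succ,
          ite_true, if_true]
        ring
    · simp only [if_neg hM]
      by_cases hi : i = 0
      · simp only [if_pos hi, if_neg (show ¬ M + 1 = i from by omega)]
        ring
      · simp only [if_neg hi]
        by_cases hMi : M = i - 1
        · simp only [if_pos (show M + 1 = i from by omega), if_pos hMi]
          ring
        · simp only [if_neg (show ¬ M + 1 = i from by omega), if_neg hMi]
          ring
  rw [Finset.sum_congr rfl (fun f' _ => hpt (numChains f'.1) (numCycles f'.1)),
    Finset.sum_add_distrib, ← Finset.mul_sum]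
  congr 1
  by_cases hi : i = 0
  · simp [hi]
  · simp only [if_neg hi]

theorem T_eq : ∀ m i : ℕ, ∀ β : ℚ, T m i β
    = (m.choose i : ℚ) * ∏ j ∈ Finset.Ico i m, (β + (j:ℚ)) := by
  intro m
  induction m with
  | zero =>
    intro i β
    haveI : Unique (PI 0) :=
      ⟨⟨⟨fun x => x.elim0, fun x => x.elim0⟩⟩,
       fun f => Subtype.ext (funext fun x => x.elim0)⟩
    unfold T
    rw [Fintype.sum_unique]
    have hM : numChains ((default : PI 0) : Fin 0 → Option (Fin 0)) = 0 := by
      simp [numChains]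
    have hK : numCycles ((default : PI 0) : Fin 0 → Option (Fin 0)) = 0 := by
      simp [numCycles]
    rw [hM, hK]
    cases i with
    | zero => simp
    | succ i' => simp [Nat.choose_eq_zero_of_lt (by omega : 0 < i' + 1)]
  | succ m ih =>
    intro i β
    rw [T_succ, ih, ih]
    by_cases hi0 : i = 0
    · subst hi0
      rw [if_pos rfl, Finset.prod_Ico_succ_top (Nat.zero_le m)]
      simp only [Nat.choose_zero_right, Nat.cast_one, Nat.cast_zero]
      ring
    · rw [if_neg hi0]
      obtain ⟨i', rfl⟩ : ∃ i', i = i' + 1 := ⟨i - 1, by omega⟩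
      simp only [Nat.add_sub_cancel]
      by_cases him : i' + 1 ≤ m
      · rw [Finset.prod_Ico_succ_top him,
          Finset.prod_eq_prod_Ico_succ_bot (by omega : i' < m)]
        have hch : ((m.choose (i'+1) : ℚ)) * (i'+1) = (m.choose i') * ((m:ℚ) - i') := by
          have h := Nat.choose_succ_right_eq m i'
          have h' : ((m.choose (i'+1) * (i'+1) : ℕ) : ℚ) = ((m.choose i' * (m - i') : ℕ) : ℚ) := by
            exact_mod_cast congrArg (fun t : ℕ => (t : ℚ)) h
          push_cast [Nat.cast_sub (by omega : i' ≤ m)] at h'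
          exact h'
        have hchsum : (((m+1).choose (i'+1) : ℕ) : ℚ) = (m.choose i' : ℚ) + (m.choose (i'+1) : ℚ) := by
          rw [Nat.choose_succ_succ]
          push_cast
          ring
        rw [hchsum]
        push_cast
        linear_combination (∏ j ∈ Finset.Ico (i'+1) m, (β + (j:ℚ))) * hch
      · by_cases heq : i' + 1 = m + 1
        · have hi'm : i' = m := by omega
          rw [hi'm]
          simp [Nat.choose_self, Nat.choose_eq_zero_of_lt (by omega : m < m + 1),
            Finset.Ico_self]
        · rw [Nat.choose_eq_zero_of_lt (by omega : m < i'),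
            Nat.choose_eq_zero_of_lt (by omega : m < i' + 1),
            Nat.choose_eq_zero_of_lt (by omega : m + 1 < i' + 1)]
          simp

theorem desc_eval_prod (k : ℕ) (x : ℚ) :
    (descPochhammer ℚ k).eval x = ∏ t ∈ Finset.range k, (x - t) := by
  induction k with
  | zero => simp [descPochhammer]
  | succ k ih => rw [descPochhammer_succ_eval, Finset.prod_range_succ, ih]

theorem numChains_le (m : ℕ) (f : Fin m → Option (Fin m)) : numChains f ≤ m := by
  unfold numChains
  exact le_trans (Finset.card_filter_le _ _) (by simp)

end Stmt11

/-- For n ≥ 1, the weighted count α^M β^K over all partial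
permutations of {1,…,n} (M = number of chains, K = number of cycles of the
functional graph) equals
p^n(α,β) = (-1)^n n! Σ_{i=0}^{n} ((-α)^i/i!) C(-β-i, n-i),
with C the generalized binomial coefficient. -/

theorem stmt11 (n : ℕ) (hn : 1 ≤ n) (α β : ℚ) :
    ∑ σ : {f : Fin n → Option (Fin n) //
        ∀ i j a, f i = some a → f j = some a → i = j},
      α ^ numChains σ.1 * β ^ numCycles σ.1 =
    (-1 : ℚ) ^ n * n.factorial *
      ∑ i ∈ Finset.range (n + 1),
        (-α) ^ i / i.factorial *
          ((descPochhammer ℚ (n - i)).eval (-β - i) / (n - i).factorial) := by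
  classical
  have hb : ∀ σ : Stmt11.PI n, α ^ numChains σ.1 * β ^ numCycles σ.1
      = ∑ i ∈ Finset.range (n+1),
          α ^ i * (if numChains σ.1 = i then β ^ numCycles σ.1 else 0) := by
    intro σ
    have hmem : numChains σ.1 ∈ Finset.range (n+1) :=
      Finset.mem_range.2 (by have := Stmt11.numChains_le n σ.1; omega)
    have hit : ∀ i, α ^ i * (if numChains σ.1 = i then β ^ numCycles σ.1 else 0)
        = if numChains σ.1 = i then α ^ i * β ^ numCycles σ.1 else 0 := fun i => by
      by_cases h : numChains σ.1 = i <;> simp [h]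
    rw [Finset.sum_congr rfl fun i _ => hit i, Finset.sum_ite_eq, if_pos hmem]
  have hsplit : (∑ σ : Stmt11.PI n, α ^ numChains σ.1 * β ^ numCycles σ.1)
      = ∑ i ∈ Finset.range (n + 1), α ^ i * Stmt11.T n i β := by
    rw [Finset.sum_congr rfl fun σ _ => hb σ, Finset.sum_comm]
    exact Finset.sum_congr rfl fun i _ => by rw [Stmt11.T, ← Finset.mul_sum]
  rw [hsplit, Finset.mul_sum]
  apply Finset.sum_congr rfl
  intro i hi
  have hin : i ≤ n := by
    rw [Finset.mem_range] at hi
    omega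
  have key : (-1:ℚ)^n * ((-α)^i * (descPochhammer ℚ (n-i)).eval (-β - (i:ℚ)))
      = α ^ i * ∏ j ∈ Finset.Ico i n, (β + (j:ℚ)) := by
    have h1 : (-1:ℚ)^n = (-1)^i * (-1)^(n-i) := by
      rw [← pow_add]
      congr 1
      omega
    rw [h1, Stmt11.desc_eval_prod, Finset.prod_Ico_eq_prod_range, mul_mul_mul_comm]
    congr 1
    · rw [← mul_pow]
      norm_num
    · rw [show ((-1:ℚ))^(n-i) = ∏ _t ∈ Finset.range (n-i), (-1:ℚ) by
        rw [Finset.prod_const, Finset.card_range], ← Finset.prod_mul_distrib]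
      apply Finset.prod_congr rfl
      intro t _
      push_cast
      ring
  rw [Stmt11.T_eq n i β, Nat.cast_choose ℚ hin]
  linear_combination
    (-(n.factorial : ℚ) / ((i.factorial : ℚ) * ((n-i).factorial : ℚ))) * key
end
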